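/- arXiv:math/0010169 — 2 statements merged into one kernel-verified Lean document; each statement's English description precedes it below -/
import Mathlib

section
/- Let A ⊂ ℤ≥0 finite with 0 ∈ A, N = #A ≥ 2. Suppose A(x) = Σ_{a∈A} x^a has a spectrum θ₁,...,θ_{N-1} and A(x) has fewer than 3N/2 − 1 roots of modulus 1. Then the numbers e^{2πiθⱼ} (j = 0,...,N-1, θ₀ = 0) are exactly the N-th roots of unity, i.e., θⱼ ∈ (1/N)ℤ, and 1 + x + ... + x^{N-1} divides A(x). -/
/-!
Put `B = {e^{2πiθ_j}}`, a set of `N` points on the unit circle containing `1`. Every quotient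
`b / c ≠ 1` of two points of `B` is a unimodular zero of `A`, so the bound on these zeros gives
`|B / B| < 3|B| / 2`. With so few quotients `B / B` is closed under multiplication: for
`x, y ∈ B / B` the sets `B ∩ xB` and `B ∩ y⁻¹B` both have more than `|B| / 2` elements, so they
meet. Hence `B / B` is a finite subgroup of the circle, i.e. the group of `m`-th roots of unity
with `m = |B / B| ≥ N`, and `A` vanishes at all of them except `1`, so `1 + x + ⋯ + x^{m-1}`
divides `A`. Evaluating at `1` gives `m ∣ N`, hence `m = N` and `B = B / B`.
-/

open Polynomial Complex Finset Pointwise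

namespace Finset

section DivisionMonoid

variable {α : Type*} [DivisionMonoid α] [DecidableEq α] {s : Finset α} {x : α}

lemma inv_mem_div_self (hx : x ∈ s / s) : x⁻¹ ∈ s / s := by
  obtain ⟨a, ha, b, hb, rfl⟩ := mem_div.1 hx
  exact mem_div.2 ⟨b, hb, a, ha, (inv_div a b).symm⟩

end DivisionMonoid

section CommGroup

variable {G : Type*} [CommGroup G] [DecidableEq G] {B : Finset G} {x y : G}

lemma card_lt_two_mul_card_inter_smul_of_div_lt_three_halves (hB : 2 * #(B / B) < 3 * #B)
    (hx : x ∈ B / B) : #B < 2 * #(B ∩ x • B) := by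
  obtain ⟨a, ha, b, hb, rfl⟩ := mem_div.1 hx
  have hunion : B ∪ (a / b) • B ⊆ a • (B / B) := by
    refine union_subset (fun c hc => ?_) (fun c hc => ?_)
    · exact mem_smul_finset.2 ⟨c / a, div_mem_div hc ha, mul_div_cancel _ _⟩
    · obtain ⟨d, hd, rfl⟩ := mem_smul_finset.1 hc
      exact mem_smul_finset.2 ⟨d / b, div_mem_div hd hb, by
        rw [smul_eq_mul, smul_eq_mul, div_mul_eq_mul_div, mul_div_assoc]⟩
  have hle := card_le_card hunion
  have hsum := card_inter_add_card_union B ((a / b) • B)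
  rw [card_smul_finset] at hle hsum
  omega

lemma mul_mem_div_of_div_lt_three_halves (hB : 2 * #(B / B) < 3 * #B)
    (hx : x ∈ B / B) (hy : y ∈ B / B) : x * y ∈ B / B := by
  have hX := card_lt_two_mul_card_inter_smul_of_div_lt_three_halves hB hx
  have hY := card_lt_two_mul_card_inter_smul_of_div_lt_three_halves hB (inv_mem_div_self hy)
  obtain ⟨c, hc⟩ : ((B ∩ x • B) ∩ (B ∩ y⁻¹ • B)).Nonempty := by
    rw [← card_pos]
    have hsum := card_inter_add_card_union (B ∩ x • B) (B ∩ y⁻¹ • B)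
    have hle : #((B ∩ x • B) ∪ (B ∩ y⁻¹ • B)) ≤ #B :=
      card_le_card (union_subset inter_subset_left inter_subset_left)
    omega
  simp only [mem_inter, mem_smul_finset, smul_eq_mul] at hc
  obtain ⟨⟨-, b, hb, rfl⟩, -, d, hd, hbd⟩ := hc
  exact mem_div.2 ⟨d, hd, b, hb, by
    rw [div_eq_iff_eq_mul, inv_mul_eq_iff_eq_mul.1 hbd, mul_left_comm, mul_assoc]⟩

def divSubgroup (B : Finset G) (hB : 2 * #(B / B) < 3 * #B) : Subgroup G where
  carrier := ↑(B / B)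
  one_mem' := by
    obtain ⟨b, hb⟩ : B.Nonempty := by rw [← card_pos]; omega
    exact mem_coe.2 <| mem_div.2 ⟨b, hb, b, hb, div_self' b⟩
  inv_mem' hx := mem_coe.2 (inv_mem_div_self (mem_coe.1 hx))
  mul_mem' hx hy :=
    mem_coe.2 (mul_mem_div_of_div_lt_three_halves hB (mem_coe.1 hx) (mem_coe.1 hy))

lemma pow_card_div_eq_one_of_div_lt_three_halves (hB : 2 * #(B / B) < 3 * #B)
    (hx : x ∈ B / B) : x ^ #(B / B) = 1 := by
  have hcard : Nat.card (divSubgroup B hB) = #(B / B) := by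
    change Nat.card (↑(B / B) : Set G) = _
    rw [Nat.card_coe_set_eq, Set.ncard_coe_finset]
  simpa [hcard] using congrArg Subtype.val (pow_card_eq_one' (x := (⟨x, hx⟩ : divSubgroup B hB)))

end CommGroup

end Finset

namespace Polynomial

lemma eq_nthRootsFinset_of_pow_card_eq_one {R : Type*} [CommRing R] [IsDomain R]
    {T : Finset R} (hT : T.Nonempty) (h : ∀ t ∈ T, t ^ #T = 1) :
    T = nthRootsFinset #T (1 : R) := by
  classical
  refine eq_of_subset_of_card_le (fun t ht => (mem_nthRootsFinset hT.card_pos 1).2 (h t ht)) ?_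
  rw [nthRootsFinset_def]
  exact (Multiset.toFinset_card_le _).trans (card_nthRoots _ _)

lemma geom_sum_X_dvd_of_isRoot {K : Type*} [Field K] [IsAlgClosed K] [CharZero K]
    {m : ℕ} (hm : m ≠ 0) {p : K[X]} (hp : p ≠ 0)
    (h : ∀ ζ : K, ζ ^ m = 1 → ζ ≠ 1 → p.IsRoot ζ) : (∑ i ∈ range m, (X : K[X]) ^ i) ∣ p := by
  have hgeom : (∑ i ∈ range m, (X : K[X]) ^ i) * (X - 1) = X ^ m - 1 := geom_sum_mul X m
  have hne : (∑ i ∈ range m, (X : K[X]) ^ i) ≠ 0 := (monic_geom_sum_X hm).ne_zero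
  have hsep : (∑ i ∈ range m, (X : K[X]) ^ i).Separable :=
    (X_pow_sub_one_separable_iff.2 (Nat.cast_ne_zero.2 hm)).of_dvd (Dvd.intro _ hgeom)
  rw [IsAlgClosed.dvd_iff_roots_le_roots hne hp, Multiset.le_iff_subset (nodup_roots hsep)]
  intro ζ hζ
  have hζ0 : (∑ i ∈ range m, ζ ^ i) = 0 := by simpa [eval_finsetSum] using (mem_roots hne).1 hζ
  refine (mem_roots hp).2 (h ζ ?_ ?_)
  · simpa [eval_finsetSum, hζ0, sub_eq_zero] using (congrArg (eval ζ) hgeom).symm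
  · rintro rfl
    simp [hm] at hζ0

lemma eval_sum_X_pow {R : Type*} [CommSemiring R] (A : Finset ℕ) (z : R) :
    (∑ a ∈ A, (X : R[X]) ^ a).eval z = ∑ a ∈ A, z ^ a := by
  simp [eval_finsetSum]

lemma sum_X_pow_ne_zero {R : Type*} [CommSemiring R] [CharZero R] {A : Finset ℕ}
    (hA : A.Nonempty) : (∑ a ∈ A, (X : R[X]) ^ a) ≠ 0 := by
  intro h
  simpa [eval_sum_X_pow, hA.ne_empty] using congrArg (eval 1) h

lemma geom_sum_X_dvd_sum_X_pow {A : Finset ℕ} (hA : A.Nonempty) {m : ℕ} (hm : m ≠ 0)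
    (h : ∀ ζ : ℂ, ζ ^ m = 1 → ζ ≠ 1 → ∑ a ∈ A, ζ ^ a = 0) :
    (∑ i ∈ range m, (X : ℤ[X]) ^ i) ∣ ∑ a ∈ A, X ^ a := by
  rw [← map_dvd_map (Int.castRingHom ℂ) Int.cast_injective (monic_geom_sum_X hm)]
  simp only [Polynomial.map_sum, Polynomial.map_pow, map_X]
  refine geom_sum_X_dvd_of_isRoot hm (sum_X_pow_ne_zero hA) fun ζ hζ hζ1 => ?_
  rw [IsRoot, eval_sum_X_pow]
  exact h ζ hζ hζ1

end Polynomial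

lemma finite_setOf_sum_pow_eq_zero {R : Type*} [CommRing R] [IsDomain R] [CharZero R]
    {A : Finset ℕ} (hA : A.Nonempty) : {z : R | ∑ a ∈ A, z ^ a = 0}.Finite :=
  (finite_setOfPred_isRoot (sum_X_pow_ne_zero hA)).subset fun z hz => by
    rwa [Set.mem_ofPred_eq, IsRoot, eval_sum_X_pow]

namespace Circle

open Real

lemma coe_exp_two_pi_mul (t : ℝ) :
    (Circle.exp (2 * π * t) : ℂ) = Complex.exp (2 * π * I * t) := by
  rw [coe_exp]; push_cast; ring_nf

lemma injOn_exp_two_pi_mul : Set.InjOn (fun t => Circle.exp (2 * π * t)) (Set.Ico 0 1) := by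
  intro s hs t ht hst
  have hmaps : ∀ u ∈ Set.Ico (0 : ℝ) 1, 2 * π * u ∈ Set.Ico 0 (0 + 2 * π) := fun u hu =>
    ⟨by nlinarith [pi_pos, hu.1], by nlinarith [pi_pos, hu.2]⟩
  exact mul_left_cancel₀ (by positivity) (exp_injOn_Ico (by linarith) (hmaps s hs) (hmaps t ht) hst)

lemma exists_eq_div_of_exp_two_pi_mul_pow_eq_one {t : ℝ} {n : ℕ} (hn : n ≠ 0)
    (h : Circle.exp (2 * π * t) ^ n = 1) : ∃ k : ℤ, t = k / n := by
  rw [← exp_natCast_mul, exp_eq_one] at h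
  obtain ⟨k, hk⟩ := h
  refine ⟨k, ?_⟩
  rw [eq_div_iff (Nat.cast_ne_zero.2 hn)]
  nlinarith [pi_pos]

open scoped Classical in
lemma image_coe_div_eq_nthRootsFinset {B : Finset Circle} (hB : 2 * #(B / B) < 3 * #B) :
    (B / B).image (↑) = nthRootsFinset #(B / B) (1 : ℂ) := by
  set T : Finset ℂ := (B / B).image (↑)
  have hcard : #T = #(B / B) := card_image_of_injective _ coe_injective
  have hne : B.Nonempty := by rw [← card_pos]; omega
  rw [← hcard]
  refine eq_nthRootsFinset_of_pow_card_eq_one ((hne.div hne).image _) ?_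
  rw [hcard]
  intro ζ hζ
  obtain ⟨x, hx, rfl⟩ : ∃ x : Circle, x ∈ B / B ∧ (x : ℂ) = ζ := mem_image.1 hζ
  rw [← coe_pow, pow_card_div_eq_one_of_div_lt_three_halves hB hx, coe_one]

end Circle

def unitCircleZeros (A : Finset ℕ) : Set ℂ := {z | ‖z‖ = 1 ∧ ∑ a ∈ A, z ^ a = 0}

/-- The spectrum condition on the points `e^{2πiθ_j}`; `θ₀ = 0` becomes the separate condition
`1 ∈ B`. -/
def IsSpectrum (A : Finset ℕ) (B : Finset Circle) : Prop :=
  ∀ b ∈ B, ∀ c ∈ B, b ≠ c → ∑ a ∈ A, ((b / c : Circle) : ℂ) ^ a = 0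

namespace IsSpectrum

open scoped Classical

variable {A : Finset ℕ} {B : Finset Circle}

lemma coe_mem_unitCircleZeros (hB : IsSpectrum A B) {x : Circle} (hx : x ∈ B / B)
    (hx1 : x ≠ 1) : (x : ℂ) ∈ unitCircleZeros A := by
  obtain ⟨b, hb, c, hc, rfl⟩ := mem_div.1 hx
  exact ⟨Circle.norm_coe _, hB b hb c hc fun hbc => hx1 (hbc ▸ div_self' c)⟩

lemma card_div_le_ncard_unitCircleZeros_add_one (hA : A.Nonempty) (hB : IsSpectrum A B) :
    #(B / B) ≤ (unitCircleZeros A).ncard + 1 := by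
  set Z : Finset ℂ := ((B / B).erase 1).image (↑)
  have hfin : (unitCircleZeros A).Finite :=
    (finite_setOf_sum_pow_eq_zero hA).subset fun z hz => hz.2
  have hsub : (Z : Set ℂ) ⊆ unitCircleZeros A := by
    intro z hz
    obtain ⟨x, hx, rfl⟩ := mem_image.1 hz
    exact hB.coe_mem_unitCircleZeros (mem_of_mem_erase hx) (ne_of_mem_erase hx)
  have hZ : #Z = #((B / B).erase 1) := card_image_of_injective _ Circle.coe_injective
  have hle := Set.ncard_le_ncard hsub hfin
  have herase := pred_card_le_card_erase (s := B / B) (a := 1)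
  rw [Set.ncard_coe_finset] at hle
  omega

theorem image_coe_eq_nthRootsFinset (hB : IsSpectrum A B) (h1 : 1 ∈ B) (hcard : #B = #A)
    (hroots : 2 * (unitCircleZeros A).ncard < 3 * #A - 2) :
    B.image (↑) = nthRootsFinset #A (1 : ℂ) ∧
      (∑ i ∈ range #A, (X : ℤ[X]) ^ i) ∣ ∑ a ∈ A, X ^ a := by
  have hA : A.Nonempty := by rw [← card_pos]; omega
  have hsmall : 2 * #(B / B) < 3 * #B := by
    have := hB.card_div_le_ncard_unitCircleZeros_add_one hA
    omega
  have hBm : #B ≤ #(B / B) := card_le_card_div_self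
  have himage := Circle.image_coe_div_eq_nthRootsFinset hsmall
  have hdvd : (∑ i ∈ range #(B / B), (X : ℤ[X]) ^ i) ∣ ∑ a ∈ A, X ^ a := by
    refine geom_sum_X_dvd_sum_X_pow hA (by omega) fun ζ hζ hζ1 => ?_
    rw [← mem_nthRootsFinset (by omega), ← himage] at hζ
    obtain ⟨x, hx, rfl⟩ := mem_image.1 hζ
    exact (hB.coe_mem_unitCircleZeros hx (by rintro rfl; exact hζ1 Circle.coe_one)).2
  have hmA : #(B / B) = #A := by
    have := eval_dvd (x := (1 : ℤ)) hdvd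
    simp only [eval_sum_X_pow, one_pow, sum_const, card_range, nsmul_eq_mul, mul_one] at this
    exact le_antisymm (Nat.le_of_dvd (card_pos.2 hA) (mod_cast this)) (hcard ▸ hBm)
  have hBeq : B / B = B := (eq_of_subset_of_card_le (subset_div_left h1) (by omega)).symm
  rw [← hmA]
  exact ⟨by rw [← himage, hBeq], hdvd⟩

end IsSpectrum

theorem stmt12_general (A : Finset ℕ) (N : ℕ) (hN : N = A.card)
    (θ : Fin N → ℝ) (h0 : ∀ h : 0 < N, θ ⟨0, h⟩ = 0)
    (hinj : Function.Injective θ)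
    (hIoo : ∀ j h, j ≠ ⟨0, h⟩ → θ j ∈ Set.Ioo (0 : ℝ) 1)
    (hspec : ∀ i j, i ≠ j →
      ∑ a ∈ A, Complex.exp (2 * Real.pi * Complex.I * (θ i - θ j)) ^ a = 0)
    (hroots : 2 * Set.ncard {z : ℂ | ‖z‖ = 1 ∧ ∑ a ∈ A, z ^ a = 0}
        < 3 * N - 2) :
    (∀ j, ∃ k : ℤ, θ j = (k : ℝ) / N) ∧
    (∀ ζ : ℂ, ζ ^ N = 1 → ∃ j, ζ = Complex.exp (2 * Real.pi * Complex.I * θ j)) ∧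
    (∑ i ∈ Finset.range N, (X : Polynomial ℤ) ^ i) ∣ ∑ a ∈ A, X ^ a := by
  classical
  have hN0 : 0 < N := by omega
  set z : Fin N → Circle := fun j => Circle.exp (2 * Real.pi * θ j)
  have hθ : ∀ j, θ j ∈ Set.Ico 0 1 := fun j => by
    by_cases hj : j = ⟨0, hN0⟩
    · simp [hj, h0 hN0]
    · exact Set.Ioo_subset_Ico_self (hIoo j hN0 hj)
  have hz : Function.Injective z := fun i j hij =>
    hinj (Circle.injOn_exp_two_pi_mul (hθ i) (hθ j) hij)
  have hB : IsSpectrum A (univ.image z) := by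
    simp only [IsSpectrum, mem_image, mem_univ, true_and, forall_exists_index,
      forall_apply_eq_imp_iff]
    intro i j hij
    rw [← Circle.exp_sub, ← mul_sub, Circle.coe_exp_two_pi_mul]
    exact_mod_cast hspec i j (ne_of_apply_ne z hij)
  have h1 : (1 : Circle) ∈ univ.image z := mem_image.2 ⟨⟨0, hN0⟩, mem_univ _, by simp [z, h0 hN0]⟩
  obtain ⟨himage, hdvd⟩ := hB.image_coe_eq_nthRootsFinset h1
    (by rw [card_image_of_injective _ hz, card_univ, Fintype.card_fin, hN]) (hN ▸ hroots)
  rw [← hN] at himage hdvd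
  refine ⟨fun j => ?_, fun ζ hζ => ?_, hdvd⟩
  · have hzj : (z j : ℂ) ∈ nthRootsFinset N (1 : ℂ) :=
      himage ▸ mem_image_of_mem _ (mem_image_of_mem z (mem_univ j))
    rw [mem_nthRootsFinset hN0, ← Circle.coe_pow, Circle.coe_eq_one] at hzj
    exact Circle.exists_eq_div_of_exp_two_pi_mul_pow_eq_one hN0.ne' hzj
  · rw [← mem_nthRootsFinset hN0, ← himage] at hζ
    obtain ⟨x, hx, rfl⟩ : ∃ x : Circle, x ∈ univ.image z ∧ (x : ℂ) = ζ := mem_image.1 hζ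
    obtain ⟨j, -, rfl⟩ := mem_image.1 hx
    exact ⟨j, Circle.coe_exp_two_pi_mul _⟩

theorem stmt12 (A : Finset ℕ) (h0A : 0 ∈ A) (N : ℕ) (hN : N = A.card) (hN2 : 2 ≤ N)
    (θ : Fin N → ℝ) (h0 : ∀ h : 0 < N, θ ⟨0, h⟩ = 0)
    (hinj : Function.Injective θ)
    (hIoo : ∀ j h, j ≠ ⟨0, h⟩ → θ j ∈ Set.Ioo (0 : ℝ) 1)
    (hspec : ∀ i j, i ≠ j →
      ∑ a ∈ A, Complex.exp (2 * Real.pi * Complex.I * (θ i - θ j)) ^ a = 0)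
    (hroots : 2 * Set.ncard {z : ℂ | ‖z‖ = 1 ∧ ∑ a ∈ A, z ^ a = 0}
        < 3 * N - 2) :
    (∀ j, ∃ k : ℤ, θ j = (k : ℝ) / N) ∧
    (∀ ζ : ℂ, ζ ^ N = 1 → ∃ j, ζ = Complex.exp (2 * Real.pi * Complex.I * θ j)) ∧
    (∑ i ∈ Finset.range N, (X : Polynomial ℤ) ^ i) ∣ ∑ a ∈ A, X ^ a :=
  stmt12_general A N hN θ h0 hinj hIoo hspec hroots
end

section
/- Suppose A ⊂ ℤ≥0 is finite with 0 ∈ A, N = #A ≥ 2, the polynomial A(x) = Σ_{a∈A} x^a is irreducible over ℚ, and A tiles ℤ by translations. Then N is prime, A(x) = Φ_{N^α}(x) for some α ≥ 1, and A = {0, N^{α-1}, 2N^{α-1}, ..., (N-1)N^{α-1}}. -/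
/-!
With `0 ∈ A`, membership of `n` in a tiling complement `B` is decided by the window
`B ∩ [n - max A, n)`, so by pigeonhole on windows `B` is eventually periodic, say with period `M`,
and `A` tiles `ZMod M` with some complement `S`. Then `A(ψ) S(ψ) = 0` for every nontrivial
character `ψ` of `ZMod M`; if `A(ψ)` never vanished, `S(ψ)` would, making `#S` a multiple of `M`,
which is impossible since `#A * #S = M` and `#A ≥ 2`. So `A(ζ) = 0` for a root of unity `ζ`, and
irreducibility gives `A(X) = Φ_s` with `s` the order of `ζ`. Finally `Φ_s(1) = #A ≥ 2` forces
`s = p ^ α` with `p = #A` prime, and `Φ_{p^α}(X) = ∑_{k<p} X^(k p^(α-1))` determines `A`.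
-/

open Polynomial

def IsPeriodicFrom (B : Set ℤ) (x : ℤ) (M : ℕ) : Prop :=
  ∀ n, x ≤ n → (n ∈ B ↔ n + M ∈ B)

namespace IsPeriodicFrom

variable {B : Set ℤ} {x : ℤ} {M : ℕ}

theorem add_mul_mem_iff (h : IsPeriodicFrom B x M) (k : ℕ) {n : ℤ} (hn : x ≤ n) :
    n + M * k ∈ B ↔ n ∈ B := by
  induction k with
  | zero => simp
  | succ k ih =>
    have hk : x ≤ n + M * k := le_add_of_le_of_nonneg hn (by positivity)
    rw [← ih, h _ hk]
    push_cast
    ring_nf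

theorem mem_iff_of_intCast_eq (h : IsPeriodicFrom B x M) {n m : ℤ} (hn : x ≤ n) (hm : x ≤ m)
    (hnm : (n : ZMod M) = m) : n ∈ B ↔ m ∈ B := by
  obtain ⟨c, hc⟩ := (ZMod.intCast_eq_intCast_iff_dvd_sub n m M).1 hnm
  -- `n` and `m` both reach `n + M * (c + |c|) = m + M * |c|` by steps of `M` upwards.
  have hmeet : n + M * (c + |c|).toNat = m + M * |c|.toNat := by
    rw [Int.toNat_of_nonneg (by cases abs_cases c <;> linarith),
      Int.toNat_of_nonneg (abs_nonneg c)]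
    linear_combination -hc
  rw [← h.add_mul_mem_iff _ hn, ← h.add_mul_mem_iff _ hm, hmeet]

end IsPeriodicFrom

theorem exists_isPeriodicFrom_of_window (B : Set ℤ) (D : ℕ)
    (hB : ∀ n m : ℤ, (∀ i ∈ Finset.Icc 1 D, (n - i ∈ B ↔ m - i ∈ B)) → (n ∈ B ↔ m ∈ B)) :
    ∃ x : ℤ, ∃ M : ℕ, 0 < M ∧ IsPeriodicFrom B x M := by
  let window (t : ℕ) : Set (Fin D) := {i | (t + i : ℤ) ∈ B}
  obtain ⟨x, y, hxy, hw⟩ : ∃ x y, x < y ∧ window x = window y := by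
    obtain ⟨u, v, huv, h⟩ := Finite.exists_ne_map_eq_of_infinite window
    rcases huv.lt_or_gt with h' | h'
    · exact ⟨u, v, h', h⟩
    · exact ⟨v, u, h', h.symm⟩
  have hshift : ∀ k : ℕ, ((x + k : ℤ) ∈ B ↔ (y + k : ℤ) ∈ B) := by
    intro k
    induction k using Nat.strong_induction_on with
    | _ k ih =>
      rcases lt_or_ge k D with hk | hk
      · exact Set.ext_iff.mp hw ⟨k, hk⟩
      · refine hB _ _ fun i hi => ?_
        rw [Finset.mem_Icc] at hi
        have := ih (k - i) (by omega)
        rwa [Nat.cast_sub (by omega), ← add_sub_assoc, ← add_sub_assoc] at this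
  refine ⟨x, y - x, by omega, fun n hn => ?_⟩
  obtain ⟨k, rfl⟩ : ∃ k : ℕ, n = x + k := ⟨(n - x).toNat, by omega⟩
  convert hshift k using 2
  push_cast [hxy.le]
  ring

theorem ZMod.exists_ge_intCast_eq {M : ℕ} (hM : 0 < M) (r : ZMod M) (c : ℤ) :
    ∃ n : ℤ, c ≤ n ∧ (n : ZMod M) = r := by
  have : NeZero M := .of_pos hM
  refine ⟨r.val + M * |c|, ?_, by simp⟩
  nlinarith [le_abs_self c, abs_nonneg c, (Nat.one_le_cast (α := ℤ)).2 hM]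

def IsTiling (A : Finset ℕ) (B : Set ℤ) : Prop :=
  ∀ n : ℤ, ∃! ab : ℕ × ℤ, ab.1 ∈ A ∧ ab.2 ∈ B ∧ n = (ab.1 : ℤ) + ab.2

namespace IsTiling

variable {A : Finset ℕ} {B : Set ℤ}

theorem mem_iff (hB : IsTiling A B) (h0 : 0 ∈ A) (m : ℤ) :
    m ∈ B ↔ ∀ a ∈ A, a ≠ 0 → m - a ∉ B := by
  constructor
  · intro hm a ha ha0 hma
    have := (hB m).unique (y₁ := (a, m - a)) (y₂ := (0, m)) ⟨ha, hma, by ring⟩ ⟨h0, hm, by simp⟩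
    exact ha0 (congrArg Prod.fst this)
  · intro h
    obtain ⟨⟨a, b⟩, ⟨ha, hb, rfl⟩, -⟩ := hB m
    by_cases ha0 : a = 0
    · simpa [ha0] using hb
    · exact absurd (by simpa using hb) (h a ha ha0)

theorem exists_isPeriodicFrom (hB : IsTiling A B) (h0 : 0 ∈ A) :
    ∃ x : ℤ, ∃ M : ℕ, 0 < M ∧ IsPeriodicFrom B x M := by
  refine exists_isPeriodicFrom_of_window B (A.sup id) fun n m h => ?_
  have hA : ∀ a ∈ A, a ≠ 0 → a ∈ Finset.Icc 1 (A.sup id) := fun a ha ha0 =>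
    Finset.mem_Icc.2 ⟨Nat.one_le_iff_ne_zero.2 ha0, Finset.le_sup (f := id) ha⟩
  rw [hB.mem_iff h0, hB.mem_iff h0]
  exact forall₂_congr fun a ha => imp_congr_right fun ha0 => not_congr (h a (hA a ha ha0))

theorem exists_bijOn_zmod (hB : IsTiling A B) (h0 : 0 ∈ A) :
    ∃ M : ℕ, 0 < M ∧ ∃ S : Finset (ZMod M),
      Set.BijOn (fun p : ℕ × ZMod M => (p.1 : ZMod M) + p.2) ↑(A ×ˢ S) Set.univ := by
  classical
  obtain ⟨x, M, hM, hper⟩ := hB.exists_isPeriodicFrom h0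
  have : NeZero M := .of_pos hM
  set D := A.sup id
  have hD : ∀ a ∈ A, (a : ℤ) ≤ D := fun a ha => by exact_mod_cast Finset.le_sup (f := id) ha
  let S : Finset (ZMod M) := {r | ∃ b ∈ B, x ≤ b ∧ (b : ZMod M) = r}
  have hS : ∀ b : ℤ, x ≤ b → ((b : ZMod M) ∈ S ↔ b ∈ B) := by
    intro b hb
    simp only [S, Finset.mem_filter, Finset.mem_univ, true_and]
    refine ⟨fun ⟨b', hb'B, hb', hbb'⟩ => (hper.mem_iff_of_intCast_eq hb' hb hbb').1 hb'B,
      fun hbB => ⟨b, hbB, hb, rfl⟩⟩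
  refine ⟨M, hM, S, fun _ _ => Set.mem_univ _, ?_, ?_⟩
  · rintro ⟨a, s⟩ has ⟨a', s'⟩ has' heq
    simp only [Finset.coe_product, Set.mem_prod, Finset.mem_coe] at has has' heq
    obtain ⟨n, hn, hns⟩ := ZMod.exists_ge_intCast_eq hM ((a : ZMod M) + s) (x + D)
    have hmem : ∀ a' ∈ A, ∀ s' ∈ S, (a : ZMod M) + s = a' + s' → n - a' ∈ B := by
      intro a' ha' s' hs' h
      refine (hS _ (by linarith [hD a' ha'])).1 ?_
      rwa [Int.cast_sub, hns, h, Int.cast_natCast, add_sub_cancel_left]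
    have huniq := (hB n).unique (y₁ := (a, n - a)) (y₂ := (a', n - a'))
      ⟨has.1, hmem a has.1 s has.2 rfl, by ring⟩ ⟨has'.1, hmem a' has'.1 s' has'.2 heq, by ring⟩
    obtain rfl : a = a' := congrArg Prod.fst huniq
    rw [add_left_cancel heq]
  · rintro r -
    obtain ⟨n, hn, rfl⟩ := ZMod.exists_ge_intCast_eq hM r (x + D)
    obtain ⟨⟨a, b⟩, ⟨ha, hb, rfl⟩, -⟩ := hB n
    refine ⟨(a, b), ?_, by simp⟩
    simp only [Finset.coe_product, Set.mem_prod, Finset.mem_coe]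
    exact ⟨ha, (hS b (by linarith [hD a ha])).2 hb⟩

end IsTiling

theorem exists_sum_pow_eq_zero_of_bijOn {M : ℕ} [NeZero M] {A : Finset ℕ}
    {S : Finset (ZMod M)} (hA : 1 < A.card)
    (hAS : Set.BijOn (fun p : ℕ × ZMod M => (p.1 : ZMod M) + p.2) ↑(A ×ˢ S) Set.univ) :
    ∃ ζ : ℂ, ζ ^ M = 1 ∧ ∑ a ∈ A, ζ ^ a = 0 := by
  classical
  have hcard : A.card * S.card = M := by
    rw [← Finset.card_product, Finset.card_nbij _ (fun _ _ => Finset.mem_univ _) hAS.injOn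
      (by simpa using hAS.surjOn), Finset.card_univ, ZMod.card]
  have hconv : ∀ ψ : AddChar (ZMod M) ℂ,
      (∑ a ∈ A, ψ a) * (∑ s ∈ S, ψ s) = ∑ r, ψ r := by
    intro ψ
    rw [Finset.sum_mul_sum, ← Finset.sum_product']
    exact Finset.sum_nbij _ (fun _ _ => Finset.mem_univ _) hAS.injOn
      (by simpa using hAS.surjOn) fun p _ => (AddChar.map_add_eq_mul ψ _ _).symm
  by_contra! hA0
  have hψA : ∀ ψ : AddChar (ZMod M) ℂ, ∑ a ∈ A, ψ a ≠ 0 := by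
    intro ψ
    have hpow : ∀ n : ℕ, ψ n = ψ 1 ^ n := fun n => by
      rw [← nsmul_one, AddChar.map_nsmul_eq_pow]
    simp only [hpow]
    refine hA0 _ ?_
    rw [← hpow, ZMod.natCast_self, AddChar.map_zero_eq_one]
  have hψS : ∀ ψ : AddChar (ZMod M) ℂ, ψ ≠ 0 → ∑ s ∈ S, ψ s = 0 := fun ψ hψ =>
    (mul_eq_zero.1 ((hconv ψ).trans (AddChar.sum_eq_zero_iff_ne_zero.2 hψ))).resolve_left
      (hψA ψ)
  -- Summing `∑ s ∈ S, ψ s` over all characters `ψ` in two ways shows that `M ∣ #S`.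
  have hdouble : (S.card : ℂ) = if (0 : ZMod M) ∈ S then (M : ℂ) else 0 := by
    calc (S.card : ℂ) = ∑ ψ : AddChar (ZMod M) ℂ, ∑ s ∈ S, ψ s := by
          rw [Finset.sum_eq_single 0 (fun ψ _ hψ => hψS ψ hψ) (by simp)]
          simp
      _ = ∑ s ∈ S, if s = 0 then (M : ℂ) else 0 := by
          rw [Finset.sum_comm]
          simp only [AddChar.sum_apply_eq_ite, ZMod.card]
      _ = _ := Finset.sum_ite_eq' S 0 _
  split_ifs at hdouble with h
  · have hS : S.card = M := by exact_mod_cast hdouble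
    rw [hS] at hcard
    nlinarith [NeZero.pos M]
  · have hS : S.card = 0 := by exact_mod_cast hdouble
    rw [hS, mul_zero] at hcard
    exact NeZero.ne M hcard.symm

section SumXPow

variable {R : Type*} [Semiring R]

theorem Polynomial.coeff_sum_X_pow (S : Finset ℕ) (d : ℕ) :
    (∑ a ∈ S, (X : R[X]) ^ a).coeff d = if d ∈ S then 1 else 0 := by
  simp only [finsetSum_coeff, coeff_X_pow]
  exact Finset.sum_ite_eq S d fun _ => 1

theorem Polynomial.sum_X_pow_injective [Nontrivial R] :
    Function.Injective fun S : Finset ℕ => ∑ a ∈ S, (X : R[X]) ^ a := by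
  intro S T h
  ext d
  have hd := congrArg (coeff · d) h
  simp only [coeff_sum_X_pow] at hd
  split_ifs at hd <;> simp_all

theorem Polynomial.monic_sum_X_pow {S : Finset ℕ} (hS : S.Nonempty) :
    (∑ a ∈ S, (X : R[X]) ^ a).Monic := by
  nontriviality R
  refine monic_of_natDegree_le_of_coeff_eq_one (S.max' hS) ?_ ?_
  · exact natDegree_sum_le_of_forall_le _ _ fun a ha =>
      (natDegree_X_pow_le a).trans (S.le_max' a ha)
  · simp [S.max'_mem hS]

theorem Polynomial.sum_X_pow_image_mul (n : ℕ) {m : ℕ} (hm : 0 < m) :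
    ∑ a ∈ (Finset.range n).image (· * m), (X : R[X]) ^ a = ∑ i ∈ Finset.range n, (X ^ m) ^ i := by
  rw [Finset.sum_image fun i _ j _ h => Nat.eq_of_mul_eq_mul_right hm h]
  simp only [← pow_mul, mul_comm]

end SumXPow

theorem Polynomial.eq_cyclotomic_of_irreducible_of_aeval_eq_zero {P : ℤ[X]} (hmonic : P.Monic)
    (hirr : Irreducible P) {n : ℕ} (hn : 0 < n) {ζ : ℂ} (hζ : IsPrimitiveRoot ζ n)
    (hP : aeval ζ P = 0) : P = cyclotomic n ℤ := by
  have hdvd : cyclotomic n ℤ ∣ P := by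
    rw [cyclotomic_eq_minpoly hζ hn]
    exact minpoly.isIntegrallyClosed_dvd (hζ.isIntegral hn) hP
  exact (eq_of_monic_of_associated (cyclotomic.monic n ℤ) hmonic
    ((cyclotomic.irreducible hn).associated_of_dvd hirr hdvd)).symm

theorem Polynomial.exists_prime_pow_of_one_lt_eval_one_cyclotomic {n : ℕ}
    (h : 1 < (cyclotomic n ℤ).eval 1) :
    ∃ p k : ℕ, p.Prime ∧ n = p ^ (k + 1) ∧ (cyclotomic n ℤ).eval 1 = p := by
  by_contra! hn
  refine h.ne' (eval_one_cyclotomic_not_prime_pow fun {p} hp k hk => ?_)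
  subst hk
  rcases k with _ | k
  · simp at h
  · have : Fact p.Prime := ⟨hp⟩
    exact hn p k hp rfl (eval_one_cyclotomic_prime_pow k)

theorem stmt15 (A : Finset ℕ) (h0A : 0 ∈ A) (N : ℕ) (hN : N = A.card) (hN2 : 2 ≤ N)
    (hirr : Irreducible (∑ a ∈ A, (X : Polynomial ℤ) ^ a))
    (htile : ∃ B : Set ℤ, ∀ n : ℤ, ∃! ab : ℕ × ℤ,
      ab.1 ∈ A ∧ ab.2 ∈ B ∧ n = (ab.1 : ℤ) + ab.2) :
    N.Prime ∧ ∃ α : ℕ, 1 ≤ α ∧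
      (∑ a ∈ A, (X : Polynomial ℤ) ^ a) = cyclotomic (N ^ α) ℤ ∧
      A = (Finset.range N).image (fun k => k * N ^ (α - 1)) := by
  obtain ⟨B, hB⟩ := htile
  obtain ⟨M, hM, S, hS⟩ := IsTiling.exists_bijOn_zmod hB h0A
  have : NeZero M := .of_pos hM
  obtain ⟨ζ, hζM, hζA⟩ := exists_sum_pow_eq_zero_of_bijOn (hN ▸ hN2) hS
  have hζ : IsPrimitiveRoot ζ (orderOf ζ) := .orderOf ζ
  have hord : 0 < orderOf ζ := orderOf_pos_iff.2 (isOfFinOrder_iff_pow_eq_one.2 ⟨M, hM, hζM⟩)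
  have hcyc : ∑ a ∈ A, (X : ℤ[X]) ^ a = cyclotomic (orderOf ζ) ℤ :=
    eq_cyclotomic_of_irreducible_of_aeval_eq_zero (monic_sum_X_pow ⟨0, h0A⟩) hirr hord hζ
      (by simpa using hζA)
  have heval : (cyclotomic (orderOf ζ) ℤ).eval 1 = N := by simp [← hcyc, eval_finsetSum, hN]
  obtain ⟨p, k, hp, hpk, hp1⟩ :=
    exists_prime_pow_of_one_lt_eval_one_cyclotomic (by rw [heval]; exact_mod_cast hN2)
  obtain rfl : N = p := by exact_mod_cast heval.symm.trans hp1
  refine ⟨hp, k + 1, le_add_self, hpk ▸ hcyc, sum_X_pow_injective (R := ℤ) ?_⟩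
  dsimp only
  rw [hcyc, hpk, cyclotomic_prime_pow_eq_geom_sum hp, Nat.add_sub_cancel,
    sum_X_pow_image_mul _ (pow_pos hp.pos k)]
end
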